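/- Let 1 < p < 3 and Λ > 0. Define F(x) = (1/(8π))·Υ(x)/(1-x) and G(x) = (1/(8π))·(1/(1-x))·[Υ(x) + 2((p-1)/(5-p))·x·Υ'(x)] for x ∈ (0,1). Then (F, G) solves the linear ODE system: F'(x) = (1/(1-x) - (5-p)/(2(p-1)x))F(x) + ((5-p)/(2(p-1)x))G(x), and G'(x) = -((3-p)/(2(p-1)x))F(x) + (1/(2(1-x)) + (3-p)/(2(p-1)x))G(x). -/

import Mathlib

open Real Filter

/-- Pochhammer symbol `(a)_k`. -/
noncomputable def poch (a : ℝ) (k : ℕ) : ℝ := ∏ i ∈ Finset.range k, (a + i)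

/-- The Gauss hypergeometric series `₂F₁(a,b,c;x)`. -/
noncomputable def hyp (a b c x : ℝ) : ℝ :=
  ∑' k : ℕ, poch a k * poch b k / poch c k * x ^ k / (Nat.factorial k : ℝ)

noncomputable def ap (p : ℝ) : ℝ :=
  (3 - p + Real.sqrt (4 + 12 * (p - 1) - 3 * (p - 1) ^ 2)) / (4 * (p - 1))

noncomputable def bp (p : ℝ) : ℝ :=
  (3 - p - Real.sqrt (4 + 12 * (p - 1) - 3 * (p - 1) ^ 2)) / (4 * (p - 1))

noncomputable def cp (p : ℝ) : ℝ := p / (p - 1)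

/-- `Υ(x) = ₂F₁(a_p, b_p, c_p; x)`. -/
noncomputable def Ups (p x : ℝ) : ℝ := hyp (ap p) (bp p) (cp p) x

noncomputable def Ffun (p x : ℝ) : ℝ := 1 / (8 * π) * (Ups p x / (1 - x))

noncomputable def Gfun (p x : ℝ) : ℝ :=
  1 / (8 * π) * (1 / (1 - x)) *
    (Ups p x + 2 * ((p - 1) / (5 - p)) * x * deriv (Ups p) x)

open Topology

/-! Υ is Mathlib's Gauss function `₂F₁ (a_p) (b_p) (c_p)`, whose series converges on the unit
disc. Term-by-term differentiation gives `(₂F₁ a b c)' = (a b / c) ₂F₁ (a+1) (b+1) (c+1)`, and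
the coefficient recurrence `(n+1)(c+n) tₙ₊₁ = (a+n)(b+n) tₙ` becomes the hypergeometric equation.
With `a_p + b_p` and `a_p b_p` read off by Vieta, that equation expresses `Υ''` through `Υ` and
`Υ'`; both components of the system are then rational identities in `x`, `Υ(x)` and `Υ'(x)`. -/

theorem hasSum_mul_pow_of_hasSum_succ {R : Type*} [CommRing R] [TopologicalSpace R]
    [IsTopologicalRing R] {e : ℕ → R} {x s : R} (h : HasSum (fun n => e (n + 1) * x ^ n) s) :
    HasSum (fun n => e n * x ^ n) (e 0 + x * s) := by
  refine (hasSum_nat_add_iff' 1).mp ?_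
  simp only [Finset.sum_range_one, pow_zero, mul_one, add_sub_cancel_left]
  have hshift : (fun n => e (n + 1) * x ^ (n + 1)) = fun n => x * (e (n + 1) * x ^ n) := by
    ext n; ring
  exact hshift ▸ h.mul_left x

theorem hypergeometric_ode_of_hasSum {R : Type*} [CommRing R] [TopologicalSpace R]
    [IsTopologicalRing R] [T2Space R] {a b c x f f' f'' : R} {t : ℕ → R}
    (ht : ∀ n : ℕ, (n + 1) * (c + n) * t (n + 1) = (a + n) * (b + n) * t n)
    (h0 : HasSum (fun n => t n * x ^ n) f)
    (h1 : HasSum (fun n : ℕ => (n + 1) * t (n + 1) * x ^ n) f')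
    (h2 : HasSum (fun n : ℕ => (n + 1) * (n + 2) * t (n + 2) * x ^ n) f'') :
    x * (1 - x) * f'' + (c - (a + b + 1) * x) * f' - a * b * f = 0 := by
  have hxf'' : HasSum (fun n : ℕ => n * (n + 1) * t (n + 1) * x ^ n) (x * f'') := by
    simpa using hasSum_mul_pow_of_hasSum_succ (e := fun n : ℕ => n * (n + 1) * t (n + 1))
      (by simpa [add_assoc, one_add_one_eq_two] using h2)
  have hxf' : HasSum (fun n : ℕ => n * t n * x ^ n) (x * f') := by
    simpa using hasSum_mul_pow_of_hasSum_succ (e := fun n : ℕ => n * t n) (by simpa using h1)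
  have hx2f'' : HasSum (fun n : ℕ => n * (n - 1) * t n * x ^ n) (x * (x * f'')) := by
    simpa using hasSum_mul_pow_of_hasSum_succ (e := fun n : ℕ => n * (n - 1) * t n)
      (by simpa [mul_comm] using hxf'')
  have hterms (n : ℕ) :
      n * (n + 1) * t (n + 1) * x ^ n + c * ((n + 1) * t (n + 1) * x ^ n) =
        n * (n - 1) * t n * x ^ n + (a + b + 1) * (n * t n * x ^ n) + a * b * (t n * x ^ n) := by
    linear_combination x ^ n * ht n
  have hlhs := hxf''.add (h1.mul_left c)
  have hrhs := (hx2f''.add (hxf'.mul_left (a + b + 1))).add (h0.mul_left (a * b))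
  simp_rw [hterms] at hlhs
  linear_combination hlhs.unique hrhs

section PowerSeries

variable {𝕂 : Type*} [RCLike 𝕂]

theorem hasDerivAt_tsum_mul_pow {t : ℕ → 𝕂} {r : ℝ} {x : 𝕂} (hx : ‖x‖ < r)
    (ht : Summable fun n : ℕ => ‖(n + 1 : 𝕂) * t (n + 1)‖ * r ^ n) :
    HasDerivAt (fun y => ∑' n, t n * y ^ n)
      (∑' n : ℕ, (n + 1 : 𝕂) * t (n + 1) * x ^ n) x := by
  have hr : 0 < r := (norm_nonneg x).trans_lt hx
  set u : ℕ → ℝ := fun n => ‖(n : 𝕂) * t n‖ * r ^ (n - 1)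
  have hu : Summable u := (summable_nat_add_iff 1).mp
    (ht.congr fun n => by simp only [u, Nat.cast_succ, add_tsub_cancel_right])
  have hbound (n : ℕ) (y : 𝕂) (hy : y ∈ Metric.ball 0 r) :
      ‖t n * (n * y ^ (n - 1))‖ ≤ u n := by
    rw [mem_ball_zero_iff] at hy
    calc ‖t n * (n * y ^ (n - 1))‖ = ‖(n : 𝕂) * t n‖ * ‖y‖ ^ (n - 1) := by
          rw [norm_mul, norm_mul, norm_mul, norm_pow]; ring
      _ ≤ ‖(n : 𝕂) * t n‖ * r ^ (n - 1) := by gcongr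
  have hx' : x ∈ Metric.ball 0 r := mem_ball_zero_iff.mpr hx
  refine (hasDerivAt_tsum_of_isPreconnected hu Metric.isOpen_ball
    (convex_ball (0 : 𝕂) r).isPreconnected
    (fun n y _ => (hasDerivAt_pow n y).const_mul (t n)) hbound (Metric.mem_ball_self hr)
    (summable_of_ne_finset_zero (s := {0}) fun n hn => by simp_all) hx').congr_deriv ?_
  rw [(Summable.of_norm_bounded hu fun n => hbound n x hx').tsum_eq_zero_add]
  simp only [Nat.cast_zero, zero_mul, mul_zero, zero_add]
  exact tsum_congr fun n => by push_cast; ring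

end PowerSeries

section Hypergeometric

variable {𝕂 : Type*} [RCLike 𝕂] (a b c : 𝕂)

-- A nonpositive integer parameter makes the series terminate; for `c` this relies on `0⁻¹ = 0`.
theorem one_le_radius_ordinaryHypergeometricSeries :
    1 ≤ (ordinaryHypergeometricSeries 𝕂 a b c).radius := by
  by_cases habc : ∀ k : ℕ, (k : 𝕂) ≠ -a ∧ (k : 𝕂) ≠ -b ∧ (k : 𝕂) ≠ -c
  · exact (ordinaryHypergeometricSeries_radius_eq_one 𝕂 a b c habc).ge
  simp only [not_forall, not_and_or, not_not] at habc
  obtain ⟨k, hk | hk | hk⟩ := habc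
  · simp [neg_eq_iff_eq_neg.mp hk.symm, ordinaryHypergeometric_radius_top_of_neg_nat₁]
  · simp [neg_eq_iff_eq_neg.mp hk.symm, ordinaryHypergeometric_radius_top_of_neg_nat₂]
  · simp [neg_eq_iff_eq_neg.mp hk.symm, ordinaryHypergeometric_radius_top_of_neg_nat₃]

variable {a b c} in
theorem hasSum_ordinaryHypergeometric {x : 𝕂} (hx : ‖x‖ < 1) :
    HasSum (fun n => ordinaryHypergeometricCoefficient a b c n * x ^ n) (₂F₁ a b c x) := by
  have hx' : x ∈ Metric.eball (0 : 𝕂) (ordinaryHypergeometricSeries 𝕂 a b c).radius := by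
    refine lt_of_lt_of_le ?_ (one_le_radius_ordinaryHypergeometricSeries a b c)
    rwa [edist_dist, dist_zero_right, ENNReal.ofReal_lt_one]
  have h := (ordinaryHypergeometricSeries 𝕂 a b c).hasSum hx'
  rw [ordinaryHypergeometricSeries_apply_eq'] at h
  simp only [smul_eq_mul] at h
  exact h

theorem summable_norm_ordinaryHypergeometricCoefficient_mul_pow {r : ℝ} (hr0 : 0 ≤ r)
    (hr : r < 1) : Summable fun n => ‖ordinaryHypergeometricCoefficient a b c n‖ * r ^ n := by
  lift r to NNReal using hr0
  have hr' : (r : ENNReal) < (ordinaryHypergeometricSeries 𝕂 a b c).radius :=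
    lt_of_lt_of_le (by exact_mod_cast hr) (one_le_radius_ordinaryHypergeometricSeries a b c)
  simpa [ordinaryHypergeometricSeries, FormalMultilinearSeries.ofScalars_norm] using
    (ordinaryHypergeometricSeries 𝕂 a b c).summable_norm_mul_pow hr'

theorem succ_mul_ordinaryHypergeometricCoefficient_succ (n : ℕ) :
    (n + 1 : 𝕂) * ordinaryHypergeometricCoefficient a b c (n + 1) =
      a * b / c * ordinaryHypergeometricCoefficient (a + 1) (b + 1) (c + 1) n := by
  have hn : (n + 1 : 𝕂) ≠ 0 := Nat.cast_add_one_ne_zero n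
  simp only [ordinaryHypergeometricCoefficient, ascPochhammer_succ_left, Polynomial.eval_mul,
    Polynomial.eval_X, Polynomial.eval_comp, Polynomial.eval_add, Polynomial.eval_one,
    Nat.factorial_succ, Nat.cast_mul, Nat.cast_succ, mul_inv]
  field_simp

theorem ordinaryHypergeometricCoefficient_recurrence (n : ℕ) (hc : c + n ≠ 0) :
    (n + 1) * (c + n) * ordinaryHypergeometricCoefficient a b c (n + 1) =
      (a + n) * (b + n) * ordinaryHypergeometricCoefficient a b c n := by
  have hn : (n + 1 : 𝕂) ≠ 0 := Nat.cast_add_one_ne_zero n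
  simp only [ordinaryHypergeometricCoefficient, ascPochhammer_succ_eval,
    Nat.factorial_succ, Nat.cast_mul, Nat.cast_succ, mul_inv]
  field_simp

variable {a b c} in
theorem hasDerivAt_ordinaryHypergeometric {x : 𝕂} (hx : ‖x‖ < 1) :
    HasDerivAt (₂F₁ a b c) (a * b / c * ₂F₁ (a + 1) (b + 1) (c + 1) x) x := by
  obtain ⟨r, hxr, hr1⟩ := exists_between hx
  have hF : ₂F₁ a b c = fun y => ∑' n, ordinaryHypergeometricCoefficient a b c n * y ^ n := by
    simpa only [smul_eq_mul] using ordinaryHypergeometric_eq_tsum (𝔸 := 𝕂) a b c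
  have hcoeff (n : ℕ) (y : 𝕂) :
      (n + 1 : 𝕂) * ordinaryHypergeometricCoefficient a b c (n + 1) * y =
        a * b / c * (ordinaryHypergeometricCoefficient (a + 1) (b + 1) (c + 1) n * y) := by
    rw [succ_mul_ordinaryHypergeometricCoefficient_succ, mul_assoc]
  rw [hF]
  refine (hasDerivAt_tsum_mul_pow hxr ?_).congr_deriv ?_
  · refine ((summable_norm_ordinaryHypergeometricCoefficient_mul_pow (a + 1) (b + 1) (c + 1)
      ((norm_nonneg x).trans hxr.le) hr1).mul_left ‖a * b / c‖).congr fun n => ?_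
    rw [succ_mul_ordinaryHypergeometricCoefficient_succ, norm_mul (a * b / c), mul_assoc]
  · rw [tsum_congr fun n => hcoeff n (x ^ n), tsum_mul_left,
      (hasSum_ordinaryHypergeometric hx).tsum_eq]

variable {a b c} in
theorem hasDerivAt_deriv_ordinaryHypergeometric {x : 𝕂} (hx : ‖x‖ < 1) :
    HasDerivAt (deriv (₂F₁ a b c))
      (a * b / c * deriv (₂F₁ (a + 1) (b + 1) (c + 1)) x) x := by
  refine ((hasDerivAt_ordinaryHypergeometric hx).differentiableAt.hasDerivAt.const_mul
    (a * b / c)).congr_of_eventuallyEq ?_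
  filter_upwards [Metric.isOpen_ball.mem_nhds (mem_ball_zero_iff.mpr hx)] with y hy
  exact (hasDerivAt_ordinaryHypergeometric (mem_ball_zero_iff.mp hy)).deriv

variable {a b c} in
theorem hasSum_deriv_ordinaryHypergeometric {x : 𝕂} (hx : ‖x‖ < 1) :
    HasSum (fun n : ℕ => (n + 1) * ordinaryHypergeometricCoefficient a b c (n + 1) * x ^ n)
      (deriv (₂F₁ a b c) x) := by
  have hterms : (fun n : ℕ => (n + 1) * ordinaryHypergeometricCoefficient a b c (n + 1) * x ^ n) =
      fun n => a * b / c * (ordinaryHypergeometricCoefficient (a + 1) (b + 1) (c + 1) n * x ^ n) :=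
    funext fun n => by rw [succ_mul_ordinaryHypergeometricCoefficient_succ, mul_assoc]
  rw [hterms, (hasDerivAt_ordinaryHypergeometric hx).deriv]
  exact (hasSum_ordinaryHypergeometric hx).mul_left _

variable {a b c} in
theorem hasSum_deriv_deriv_ordinaryHypergeometric {x : 𝕂} (hx : ‖x‖ < 1) :
    HasSum (fun n : ℕ =>
        (n + 1) * (n + 2) * ordinaryHypergeometricCoefficient a b c (n + 2) * x ^ n)
      (deriv (deriv (₂F₁ a b c)) x) := by
  have hcoeff : ∀ n : ℕ,
      (n + 1) * (n + 2) * ordinaryHypergeometricCoefficient a b c (n + 2) * x ^ n =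
        a * b / c * ((n + 1) *
          ordinaryHypergeometricCoefficient (a + 1) (b + 1) (c + 1) (n + 1) * x ^ n) := by
    intro n
    have h := succ_mul_ordinaryHypergeometricCoefficient_succ a b c (n + 1)
    push_cast at h
    linear_combination (n + 1) * x ^ n * h
  simp_rw [hcoeff, (hasDerivAt_deriv_ordinaryHypergeometric hx).deriv]
  exact (hasSum_deriv_ordinaryHypergeometric hx).mul_left _

variable {a b c} in
theorem ordinaryHypergeometric_ode {x : 𝕂} (hc : ∀ n : ℕ, c + n ≠ 0) (hx : ‖x‖ < 1) :
    x * (1 - x) * deriv (deriv (₂F₁ a b c)) x + (c - (a + b + 1) * x) * deriv (₂F₁ a b c) x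
      - a * b * ₂F₁ a b c x = 0 :=
  hypergeometric_ode_of_hasSum
    (fun n => ordinaryHypergeometricCoefficient_recurrence a b c n (hc n))
    (hasSum_ordinaryHypergeometric hx) (hasSum_deriv_ordinaryHypergeometric hx)
    (hasSum_deriv_deriv_ordinaryHypergeometric hx)

end Hypergeometric

theorem poch_eq_ascPochhammer_eval (a : ℝ) (k : ℕ) :
    poch a k = (ascPochhammer ℝ k).eval a := by
  induction k with
  | zero => simp [poch]
  | succ k ih => rw [poch, Finset.prod_range_succ, ← poch, ih, ascPochhammer_succ_eval]

theorem hyp_eq_ordinaryHypergeometric (a b c : ℝ) : hyp a b c = ₂F₁ a b c := by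
  ext x
  rw [hyp, ordinaryHypergeometric_eq_tsum]
  exact tsum_congr fun k => by simp only [poch_eq_ascPochhammer_eval, smul_eq_mul]; ring

section Upsilon

variable {p : ℝ}

theorem ap_add_bp (hp : p ≠ 1) : ap p + bp p = (3 - p) / (2 * (p - 1)) := by
  have : p - 1 ≠ 0 := sub_ne_zero.mpr hp
  unfold ap bp
  field_simp
  ring

theorem ap_mul_bp (hp : p ≠ 1) (hdisc : 0 ≤ 4 + 12 * (p - 1) - 3 * (p - 1) ^ 2) :
    ap p * bp p = -((5 - p) / (4 * (p - 1))) := by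
  have : p - 1 ≠ 0 := sub_ne_zero.mpr hp
  unfold ap bp
  field_simp
  linear_combination (-1) * Real.sq_sqrt hdisc

theorem cp_add_natCast_pos (hp : 1 < p) (n : ℕ) : 0 < cp p + n := by
  unfold cp
  have : 0 < p / (p - 1) := div_pos (by linarith) (by linarith)
  positivity

theorem Ups_eq_ordinaryHypergeometric (p : ℝ) : Ups p = ₂F₁ (ap p) (bp p) (cp p) :=
  hyp_eq_ordinaryHypergeometric _ _ _

theorem Ups_ode (hp1 : 1 < p) (hp3 : p < 3) {x : ℝ} (hx : |x| < 1) :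
    x * (1 - x) * deriv (deriv (Ups p)) x
      + (p / (p - 1) - ((3 - p) / (2 * (p - 1)) + 1) * x) * deriv (Ups p) x
      + (5 - p) / (4 * (p - 1)) * Ups p x = 0 := by
  have hode := ordinaryHypergeometric_ode (a := ap p) (b := bp p)
    (fun n => (cp_add_natCast_pos hp1 n).ne') (show ‖x‖ < 1 from hx)
  rw [ap_add_bp hp1.ne', ap_mul_bp hp1.ne' (by nlinarith)] at hode
  rw [Ups_eq_ordinaryHypergeometric]
  unfold cp at hode ⊢
  linear_combination hode

theorem differentiableAt_Ups {x : ℝ} (hx : |x| < 1) : DifferentiableAt ℝ (Ups p) x := by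
  rw [Ups_eq_ordinaryHypergeometric]
  exact (hasDerivAt_ordinaryHypergeometric (show ‖x‖ < 1 from hx)).differentiableAt

theorem differentiableAt_deriv_Ups {x : ℝ} (hx : |x| < 1) :
    DifferentiableAt ℝ (deriv (Ups p)) x := by
  rw [Ups_eq_ordinaryHypergeometric]
  exact (hasDerivAt_deriv_ordinaryHypergeometric (show ‖x‖ < 1 from hx)).differentiableAt

end Upsilon

section FG

variable {p x : ℝ}

theorem hasDerivAt_Ffun (hx : x ≠ 1) (hU : DifferentiableAt ℝ (Ups p) x) :
    HasDerivAt (Ffun p)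
      (1 / (8 * π) * ((deriv (Ups p) x * (1 - x) + Ups p x) / (1 - x) ^ 2)) x :=
  ((hU.hasDerivAt.fun_div ((hasDerivAt_id' (x := x)).const_sub 1)
    (sub_ne_zero.mpr hx.symm)).const_mul (1 / (8 * π))).congr_deriv (by ring)

theorem hasDerivAt_Gfun (hx : x ≠ 1) (hU : DifferentiableAt ℝ (Ups p) x)
    (hU' : DifferentiableAt ℝ (deriv (Ups p)) x) :
    HasDerivAt (Gfun p)
      (1 / (8 * π) * (1 / (1 - x) ^ 2) *
          (Ups p x + 2 * ((p - 1) / (5 - p)) * x * deriv (Ups p) x)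
        + 1 / (8 * π) * (1 / (1 - x)) * (deriv (Ups p) x
          + 2 * ((p - 1) / (5 - p)) * (deriv (Ups p) x + x * deriv (deriv (Ups p)) x))) x := by
  have hinv := ((hasDerivAt_const x (1 : ℝ)).fun_div ((hasDerivAt_id' (x := x)).const_sub 1)
    (sub_ne_zero.mpr hx.symm)).const_mul (1 / (8 * π))
  have hbracket := hU.hasDerivAt.fun_add
    (((hasDerivAt_id' (x := x)).const_mul (2 * ((p - 1) / (5 - p)))).fun_mul hU'.hasDerivAt)
  exact (hinv.fun_mul hbracket).congr_deriv (by ring)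

end FG

theorem stmt_11 (p : ℝ) (hp1 : 1 < p) (hp3 : p < 3) :
    ∀ x ∈ Set.Ioo (0 : ℝ) 1,
      deriv (Ffun p) x
          = (1 / (1 - x) - (5 - p) / (2 * (p - 1) * x)) * Ffun p x
              + (5 - p) / (2 * (p - 1) * x) * Gfun p x ∧
      deriv (Gfun p) x
          = -((3 - p) / (2 * (p - 1) * x)) * Ffun p x
              + (1 / (2 * (1 - x)) + (3 - p) / (2 * (p - 1) * x)) * Gfun p x := by
  rintro x ⟨hx0, hx1⟩
  have hx : |x| < 1 := abs_lt.mpr ⟨by linarith, hx1⟩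
  have h1x : 1 - x ≠ 0 := sub_ne_zero.mpr hx1.ne'
  have hp1' : p - 1 ≠ 0 := sub_ne_zero.mpr hp1.ne'
  have hp5 : 5 - p ≠ 0 := by linarith
  have hU2 : deriv (deriv (Ups p)) x = -((p / (p - 1) - ((3 - p) / (2 * (p - 1)) + 1) * x)
      * deriv (Ups p) x + (5 - p) / (4 * (p - 1)) * Ups p x) / (x * (1 - x)) := by
    rw [eq_div_iff (mul_ne_zero hx0.ne' h1x)]
    linear_combination Ups_ode hp1 hp3 hx
  rw [(hasDerivAt_Ffun hx1.ne (differentiableAt_Ups hx)).deriv,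
    (hasDerivAt_Gfun hx1.ne (differentiableAt_Ups hx) (differentiableAt_deriv_Ups hx)).deriv, hU2]
  unfold Ffun Gfun
  constructor
  · field_simp
    ring
  · field_simp
    ring
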